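/- Let g : ℝ² → ℂ be a Schwartz function. Writing ζ_j = (ξ_j, η_j) ∈ ℝ² for j = 1, …, 6 and setting ζ₆ := −(ζ₁ + ζ₂ + ζ₃ + ζ₄ + ζ₅), one has ∫_{(ℝ²)⁵} (ξ₄ + ξ₅ + ξ₆ + η₄ + η₅ + η₆) · g(ζ₁) g(ζ₂) g(ζ₃) g(ζ₄) g(ζ₅) g(ζ₆) dζ₁ dζ₂ dζ₃ dζ₄ dζ₅ = 0. -/

import Mathlib

open MeasureTheory Function

/-!
The exchange `(ζ₁, ζ₂, ζ₃) ↔ (ζ₄, ζ₅, ζ₆)` is a linear involution of the hyperplane `Γ₆`, so its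
determinant is `±1` and it preserves Lebesgue measure. It permutes the six factors `g(ζⱼ)`,
while on `Γ₆` it turns the weight `ζ₄ + ζ₅ + ζ₆` into `ζ₁ + ζ₂ + ζ₃ = -(ζ₄ + ζ₅ + ζ₆)`.
Hence the integral equals its own negative.
-/

theorem LinearMap.measurePreserving_of_involutive {E : Type*} [NormedAddCommGroup E]
    [NormedSpace ℝ E] [MeasurableSpace E] [BorelSpace E] [FiniteDimensional ℝ E]
    (μ : Measure E) [μ.IsAddHaarMeasure] {T : E →ₗ[ℝ] E} (hT : Involutive T) :
    MeasurePreserving T μ μ := by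
  have hTT : T ∘ₗ T = LinearMap.id := LinearMap.ext hT
  have hdet : LinearMap.det T * LinearMap.det T = 1 := by
    rw [← LinearMap.det_comp, hTT, LinearMap.det_id]
  have habs : |LinearMap.det T| = 1 := by
    rcases mul_self_eq_one_iff.mp hdet with h | h <;> simp [h]
  refine ⟨T.continuous_of_finiteDimensional.measurable, ?_⟩
  rw [Measure.map_linearMap_addHaar_eq_smul_addHaar μ (left_ne_zero_of_mul_eq_one hdet),
    abs_inv, habs, inv_one, ENNReal.ofReal_one, one_smul]

theorem integral_eq_zero_of_involutive_of_comp_eq_neg {α E : Type*} [MeasurableSpace α]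
    {μ : Measure α} [NormedAddCommGroup E] [NormedSpace ℝ E] {T : α → α} {f : α → E}
    (hT : MeasurePreserving T μ μ) (hinv : Involutive T) (hf : ∀ x, f (T x) = -f x) :
    ∫ x, f x ∂μ = 0 := by
  have h := hT.integral_comp' (f := MeasurableEquiv.ofInvolutive T hinv hT.measurable) f
  simp only [MeasurableEquiv.ofInvolutive_apply, hf, integral_neg] at h
  linear_combination (norm := module) (-(1 / 2 : ℝ)) • h

section SwapTriples

variable {R V : Type*} [Semiring R] [AddCommGroup V] [Module R V]

/-- A point of `Γ₆ = {ζ₁ + ⋯ + ζ₆ = 0}` is encoded by `z = (ζ₁, …, ζ₅)`, with `ζ₆ = -∑ i, z i`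
implicit; in these coordinates this is the exchange `(ζ₁, ζ₂, ζ₃) ↔ (ζ₄, ζ₅, ζ₆)`. -/
def swapTriples : (Fin 5 → V) →ₗ[R] (Fin 5 → V) where
  toFun z := ![z 3, z 4, -∑ i, z i, z 0, z 1]
  map_add' z w := by
    ext i
    fin_cases i <;> simp [Finset.sum_add_distrib, add_comm]
  map_smul' c z := by
    ext i
    fin_cases i <;> simp [Finset.smul_sum]

theorem swapTriples_apply (z : Fin 5 → V) :
    swapTriples (R := R) z = ![z 3, z 4, -∑ i, z i, z 0, z 1] := rfl

theorem neg_sum_swapTriples (z : Fin 5 → V) : -∑ i, swapTriples (R := R) z i = z 2 := by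
  rw [Fin.sum_univ_five]
  show -(z 3 + z 4 + -∑ i, z i + z 0 + z 1) = z 2
  rw [Fin.sum_univ_five]
  abel

theorem prod_swapTriples {M : Type*} [CommMonoid M] (g : V → M) (z : Fin 5 → V) :
    (∏ j, g (swapTriples (R := R) z j)) * g (-∑ i, swapTriples (R := R) z i)
      = (∏ j, g (z j)) * g (-∑ i, z i) := by
  rw [neg_sum_swapTriples, Fin.prod_univ_five]
  show g (z 3) * g (z 4) * g (-∑ i, z i) * g (z 0) * g (z 1) * g (z 2) = _
  rw [Fin.prod_univ_five]
  ac_rfl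

theorem swapTriples_involutive : Involutive (swapTriples (R := R) (V := V)) := by
  intro z
  rw [swapTriples_apply (swapTriples z), neg_sum_swapTriples]
  ext i
  fin_cases i <;> simp [swapTriples_apply]

end SwapTriples

/-- the symmetry cancellation for the six-linear term in the almost
conservation law: with `ζ₆ := −(ζ₁+⋯+ζ₅)`, the integral over `(ℝ²)⁵` of
`(ξ₄+ξ₅+ξ₆+η₄+η₅+η₆) g(ζ₁)⋯g(ζ₆)` vanishes for every Schwartz `g`. -/
theorem six_linear_symmetry_cancellation (g : SchwartzMap (ℝ × ℝ) ℂ) :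
    (∫ z : Fin 5 → ℝ × ℝ,
      ((((z 3).1 + (z 4).1 + (-(∑ i, z i)).1
          + (z 3).2 + (z 4).2 + (-(∑ i, z i)).2 : ℝ)) : ℂ)
        * ((∏ j : Fin 5, g (z j)) * g (-(∑ i, z i)))) = 0 := by
  have hT : Involutive (swapTriples (R := ℝ) (V := ℝ × ℝ)) := swapTriples_involutive
  refine integral_eq_zero_of_involutive_of_comp_eq_neg
    (LinearMap.measurePreserving_of_involutive volume hT) hT fun z => ?_
  have hweight : (z 0).1 + (z 1).1 + (z 2).1 + (z 0).2 + (z 1).2 + (z 2).2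
      = -((z 3).1 + (z 4).1 + (-(∑ i, z i)).1 + (z 3).2 + (z 4).2 + (-(∑ i, z i)).2) := by
    simp only [Prod.fst_neg, Prod.snd_neg, Fin.sum_univ_five, Prod.fst_add, Prod.snd_add]
    ring
  rw [prod_swapTriples, neg_sum_swapTriples, ← neg_mul, ← Complex.ofReal_neg, ← hweight]
  rfl
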